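/- Let M, K⁰, K₁, …, K_I be real symmetric d×d matrices with M positive definite, and set K(α) = K⁰ − Σ_{i=1}^{I} α_i·K_i. Fix α₀ ∈ ℝ^I and suppose there exist vectors φ₁(α₀), …, φ_d(α₀) ∈ ℝ^d and pairwise distinct real numbers λ₁(α₀), …, λ_d(α₀) with K(α₀)φ_q(α₀) = λ_q(α₀)·M·φ_q(α₀) and φ_q(α₀)ᵀMφ_p(α₀) = δ_{qp} for all q, p. Suppose further that for some fixed j, differentiable maps α ↦ λ_j(α) ∈ ℝ and α ↦ φ_j(α) ∈ ℝ^d defined near α₀ satisfy K(α)φ_j(α) = λ_j(α)Mφ_j(α) and φ_j(α)ᵀMφ_j(α) = 1. Then ∂φ_j/∂α_i (α₀) = Σ_{q ≠ j} [ φ_q(α₀)ᵀ·K_i·φ_j(α₀) / (λ_q(α₀) − λ_j(α₀)) ] · φ_q(α₀). -/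

import Mathlib

/-!
Restrict to the line `α₀ + t • eᵢ`, along which `K = K(α₀) - t • Kᵢ`. Differentiating
`K φⱼ = λⱼ M φⱼ` at `t = 0` gives `(K(α₀) - λⱼ M) φⱼ' = Kᵢ φⱼ + λⱼ' M φⱼ`, and differentiating
`φⱼᵀ M φⱼ = 1` gives `φⱼᵀ M φⱼ' = 0`. Pairing the first identity with `φ_q` and using the symmetry
of `K(α₀)` and `M` yields `(λ_q - λⱼ) φ_qᵀ M φⱼ' = φ_qᵀ Kᵢ φⱼ`; these are the coordinates of `φⱼ'`
in the `M`-orthonormal basis `(φ_q)`.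
-/

open Matrix Finset Filter Topology

namespace Matrix

variable {n 𝕜 : Type*} [Fintype n] [Field 𝕜]

theorem IsSymm.dotProduct_mulVec_comm {A : Matrix n n 𝕜} (hA : A.IsSymm) (x y : n → 𝕜) :
    x ⬝ᵥ A *ᵥ y = y ⬝ᵥ A *ᵥ x := by
  rw [dotProduct_mulVec, ← mulVec_transpose, hA.eq, dotProduct_comm]

variable [DecidableEq n]

theorem eq_sum_dotProduct_mulVec_smul {B : Matrix n n 𝕜} {φ : n → n → 𝕜}
    (horth : ∀ q p, φ q ⬝ᵥ B *ᵥ φ p = if q = p then 1 else 0) (u : n → 𝕜) :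
    u = ∑ q, (φ q ⬝ᵥ B *ᵥ u) • φ q := by
  set P : Matrix n n 𝕜 := of φ
  have hPBP : P * (B * Pᵀ) = 1 := by
    ext q p
    simpa [P, mul_apply, one_apply, dotProduct, mulVec, mul_sum, mul_assoc] using horth q p
  have hinv : Pᵀ * P * B = 1 :=
    mul_eq_one_comm.mp (by rw [← Matrix.mul_assoc]; exact mul_eq_one_comm.mp hPBP)
  calc u = (Pᵀ * P * B) *ᵥ u := by rw [hinv, one_mulVec]
    _ = ∑ q, (φ q ⬝ᵥ B *ᵥ u) • φ q := by
      rw [← mulVec_mulVec, ← mulVec_mulVec, mulVec_transpose, vecMul_eq_sum]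
      rfl

theorem eq_sum_erase_of_mulVec_sub_smul_mulVec_eq {A B : Matrix n n 𝕜} (hA : A.IsSymm)
    (hB : B.IsSymm) {φ : n → n → 𝕜} {lam : n → 𝕜} (heig : ∀ q, A *ᵥ φ q = lam q • B *ᵥ φ q)
    (horth : ∀ q p, φ q ⬝ᵥ B *ᵥ φ p = if q = p then 1 else 0) {j : n}
    (hlam : ∀ q, q ≠ j → lam q ≠ lam j) {v w : n → 𝕜} {μ : 𝕜}
    (hv : A *ᵥ v - lam j • B *ᵥ v = w + μ • B *ᵥ φ j) (hvj : φ j ⬝ᵥ B *ᵥ v = 0) :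
    v = ∑ q ∈ univ.erase j, (φ q ⬝ᵥ w / (lam q - lam j)) • φ q := by
  have hcoeff : ∀ q, q ≠ j → φ q ⬝ᵥ B *ᵥ v = φ q ⬝ᵥ w / (lam q - lam j) := by
    intro q hq
    have hAq : φ q ⬝ᵥ A *ᵥ v = lam q * (φ q ⬝ᵥ B *ᵥ v) := by
      rw [hA.dotProduct_mulVec_comm, heig, dotProduct_smul, smul_eq_mul,
        hB.dotProduct_mulVec_comm]
    have h := congrArg (φ q ⬝ᵥ ·) hv
    simp only [dotProduct_sub, dotProduct_add, dotProduct_smul, smul_eq_mul, hAq, horth q j,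
      if_neg hq, mul_zero, add_zero] at h
    rw [eq_div_iff (sub_ne_zero.mpr (hlam q hq)), ← h]
    ring
  calc v = ∑ q, (φ q ⬝ᵥ B *ᵥ v) • φ q := eq_sum_dotProduct_mulVec_smul horth v
    _ = ∑ q ∈ univ.erase j, (φ q ⬝ᵥ w / (lam q - lam j)) • φ q := by
      rw [← add_sum_erase _ _ (mem_univ j), hvj, zero_smul, zero_add]
      exact sum_congr rfl fun q hq => by rw [hcoeff q (ne_of_mem_erase hq)]

end Matrix

section Calculus

variable {m n 𝕜 : Type*} [Fintype n] [NontriviallyNormedField 𝕜] {g : 𝕜 → n → 𝕜} {v : n → 𝕜}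
  {x : 𝕜}

theorem HasDerivAt.dotProduct {f : 𝕜 → n → 𝕜} {u : n → 𝕜} (hf : HasDerivAt f u x)
    (hg : HasDerivAt g v x) : HasDerivAt (fun t => f t ⬝ᵥ g t) (u ⬝ᵥ g x + f x ⬝ᵥ v) x := by
  have h := HasDerivAt.fun_sum (u := univ) fun r _ =>
    (hasDerivAt_pi.mp hf r).fun_mul (hasDerivAt_pi.mp hg r)
  rwa [sum_add_distrib] at h

theorem HasDerivAt.const_mulVec (A : Matrix m n 𝕜) (hg : HasDerivAt g v x) :
    HasDerivAt (fun t => A *ᵥ g t) (A *ᵥ v) x :=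
  hasDerivAt_pi.mpr fun r => by
    simpa [mulVec] using (hasDerivAt_const x (A r)).dotProduct hg

theorem HasDerivAt.eigenpair_deriv_eq {A B C : Matrix n n 𝕜} {h : 𝕜 → 𝕜} {μ : 𝕜}
    (hg : HasDerivAt g v x) (hh : HasDerivAt h μ x)
    (heig : ∀ᶠ t in 𝓝 x, (A - t • C) *ᵥ g t = h t • B *ᵥ g t) :
    (A - x • C) *ᵥ v - h x • B *ᵥ v = C *ᵥ g x + μ • B *ᵥ g x := by
  have hlhs : HasDerivAt (fun t => (A - t • C) *ᵥ g t)
      (A *ᵥ v - (x • C *ᵥ v + (1 : 𝕜) • C *ᵥ g x)) x := by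
    simp only [sub_mulVec, smul_mulVec]
    exact (hg.const_mulVec A).sub ((hasDerivAt_id x).smul (hg.const_mulVec C))
  have hrhs := hh.smul (hg.const_mulVec B)
  have h := (hrhs.congr_of_eventuallyEq heig).unique hlhs
  rw [sub_mulVec, smul_mulVec]
  linear_combination (norm := module) -h

theorem HasDerivAt.dotProduct_mulVec_eq_zero [CharZero 𝕜] {B : Matrix n n 𝕜} (hB : B.IsSymm)
    {c : 𝕜} (hg : HasDerivAt g v x) (hc : ∀ᶠ t in 𝓝 x, g t ⬝ᵥ B *ᵥ g t = c) :
    g x ⬝ᵥ B *ᵥ v = 0 := by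
  have h := (hg.dotProduct (hg.const_mulVec B)).unique
    ((hasDerivAt_const x c).congr_of_eventuallyEq hc)
  rw [← hB.dotProduct_mulVec_comm] at h
  linear_combination h / 2

end Calculus

theorem fox_kapoor_eigenvector_sensitivity_general
    (d I : ℕ) (M K0 : Matrix (Fin d) (Fin d) ℝ) (Kmat : Fin I → Matrix (Fin d) (Fin d) ℝ)
    (hM : M.IsSymm) (hK0 : K0.IsSymm) (hKmat : ∀ i, (Kmat i).IsSymm)
    (K : (Fin I → ℝ) → Matrix (Fin d) (Fin d) ℝ)
    (hK : ∀ α, K α = K0 - ∑ i, α i • Kmat i)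
    (α₀ : Fin I → ℝ)
    -- eigenpairs at `α₀`, with pairwise distinct eigenvalues
    (φs : Fin d → (Fin d → ℝ)) (lam : Fin d → ℝ)
    (hdistinct : ∀ q p, q ≠ p → lam q ≠ lam p)
    (heig0 : ∀ q, (K α₀).mulVec (φs q) = lam q • M.mulVec (φs q))
    (horth : ∀ q p, φs q ⬝ᵥ M.mulVec (φs p) = if q = p then (1 : ℝ) else 0)
    -- a fixed mode `j` and differentiable eigenvalue/eigenvector maps near `α₀`
    (j : Fin d) (lamj : (Fin I → ℝ) → ℝ) (φj : (Fin I → ℝ) → (Fin d → ℝ))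
    (hdiff : ∀ᶠ α in nhds α₀, DifferentiableAt ℝ lamj α ∧ DifferentiableAt ℝ φj α)
    (heig : ∀ᶠ α in nhds α₀, (K α).mulVec (φj α) = lamj α • M.mulVec (φj α))
    (hnorm : ∀ᶠ α in nhds α₀, φj α ⬝ᵥ M.mulVec (φj α) = 1)
    (hlamj0 : lamj α₀ = lam j) (hφj0 : φj α₀ = φs j) :
    ∀ i, fderiv ℝ φj α₀ (Pi.single i 1) =
      ∑ q ∈ Finset.univ.erase j,
        ((φs q ⬝ᵥ (Kmat i).mulVec (φs j)) / (lam q - lam j)) • φs q := by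
  intro i
  set e : Fin I → ℝ := Pi.single i 1
  obtain ⟨hlamj_diff, hφj_diff⟩ := hdiff.self_of_nhds
  have hline : Tendsto (fun t : ℝ => α₀ + t • e) (𝓝 0) (𝓝 α₀) :=
    Continuous.tendsto' (by fun_prop) _ _ (by simp)
  have hK_line : ∀ t : ℝ, K (α₀ + t • e) = K α₀ - t • Kmat i := fun t => by
    simp [hK, e, add_smul, sum_add_distrib, Pi.single_apply, sub_add_eq_sub_sub]
  have hKsymm : (K α₀).IsSymm := by
    rw [hK]
    refine hK0.sub ?_
    simp only [IsSymm, transpose_sum, transpose_smul, (hKmat _).eq]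
  have hφ' : HasDerivAt (fun t : ℝ => φj (α₀ + t • e)) (fderiv ℝ φj α₀ e) 0 :=
    hφj_diff.hasFDerivAt.hasLineDerivAt e
  have hlam' : HasDerivAt (fun t : ℝ => lamj (α₀ + t • e)) (fderiv ℝ lamj α₀ e) 0 :=
    hlamj_diff.hasFDerivAt.hasLineDerivAt e
  have hfirst := hφ'.eigenpair_deriv_eq hlam' (hline.eventually heig |>.mono fun t ht => by
    rwa [← hK_line])
  have hnormal := hφ'.dotProduct_mulVec_eq_zero hM (hline.eventually hnorm)
  simp only [zero_smul, add_zero, sub_zero] at hfirst hnormal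
  rw [hlamj0, hφj0] at hfirst
  rw [hφj0] at hnormal
  exact eq_sum_erase_of_mulVec_sub_smul_mulVec_eq hKsymm hM heig0 horth
    (fun q hq => hdistinct q j hq) hfirst hnormal

/-- Fox–Kapoor eigenvector sensitivity for the stiffness parametrization
`K(α) = K⁰ − Σ_i α_i K_i`:
`∂φ_j/∂α_i = Σ_{q ≠ j} (φ_qᵀ K_i φ_j / (λ_q − λ_j)) φ_q`. -/
theorem fox_kapoor_eigenvector_sensitivity
    (d I : ℕ) (M K0 : Matrix (Fin d) (Fin d) ℝ) (Kmat : Fin I → Matrix (Fin d) (Fin d) ℝ)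
    (hM : M.IsSymm) (hMpd : M.PosDef) (hK0 : K0.IsSymm) (hKmat : ∀ i, (Kmat i).IsSymm)
    (K : (Fin I → ℝ) → Matrix (Fin d) (Fin d) ℝ)
    (hK : ∀ α, K α = K0 - ∑ i, α i • Kmat i)
    (α₀ : Fin I → ℝ)
    -- eigenpairs at `α₀`, with pairwise distinct eigenvalues
    (φs : Fin d → (Fin d → ℝ)) (lam : Fin d → ℝ)
    (hdistinct : ∀ q p, q ≠ p → lam q ≠ lam p)
    (heig0 : ∀ q, (K α₀).mulVec (φs q) = lam q • M.mulVec (φs q))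
    (horth : ∀ q p, φs q ⬝ᵥ M.mulVec (φs p) = if q = p then (1 : ℝ) else 0)
    -- a fixed mode `j` and differentiable eigenvalue/eigenvector maps near `α₀`
    (j : Fin d) (lamj : (Fin I → ℝ) → ℝ) (φj : (Fin I → ℝ) → (Fin d → ℝ))
    (hdiff : ∀ᶠ α in nhds α₀, DifferentiableAt ℝ lamj α ∧ DifferentiableAt ℝ φj α)
    (heig : ∀ᶠ α in nhds α₀, (K α).mulVec (φj α) = lamj α • M.mulVec (φj α))
    (hnorm : ∀ᶠ α in nhds α₀, φj α ⬝ᵥ M.mulVec (φj α) = 1)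
    (hlamj0 : lamj α₀ = lam j) (hφj0 : φj α₀ = φs j) :
    ∀ i, fderiv ℝ φj α₀ (Pi.single i 1) =
      ∑ q ∈ Finset.univ.erase j,
        ((φs q ⬝ᵥ (Kmat i).mulVec (φs j)) / (lam q - lam j)) • φs q :=
  fox_kapoor_eigenvector_sensitivity_general d I M K0 Kmat hM hK0 hKmat K hK α₀ φs lam hdistinct
    heig0 horth j lamj φj hdiff heig hnorm hlamj0 hφj0
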